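/- Fix a prime p. Let C be a chain complex of finitely generated abelian groups. Then for every n, the natural homomorphism (ℚ/ℤ_(p)) ⊗_ℤ H_n(C) → H_n((ℚ/ℤ_(p)) ⊗_ℤ C) has kernel and cokernel that are finite p-groups. -/

import Mathlib

/-!
Write `D = ℚ/ℤ_(p)`. For a complex `A --f--> B --g--> E`, right exactness of `D ⊗ -` shows that
the kernel of the comparison map `D ⊗ H → H(D ⊗ -)` is a quotient of `ker (D ⊗ ker g → D ⊗ B)`
and that its cokernel embeds into `ker (D ⊗ im g → D ⊗ E)`. So it suffices that
`ker (D ⊗ M → D ⊗ N)` is a finite `p`-group for every subgroup `M` of a finitely generated abelian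
group `N`. It is `p`-primary because `D` is. It is killed by some `c ≠ 0`: if `M'/M` is the torsion
of `N/M`, then `c • M' ⊆ M` and `M'` is a direct summand of `N`, since `N/M'` is free. Finally
`(D ⊗ M)[c]` is finite: `D` is divisible, so `D ⊗ M ≅ D ⊗ (M/torsion) ≅ Dʳ`, and `D[c]` is cyclic
of order `p ^ v_p(c)`.
-/

open TensorProduct

/-- The subring `ℤ_(p)` of `ℚ` consisting of fractions whose denominator is coprime to `p`. -/
def ZLoc (p : ℕ) : Subring ℚ where
  carrier := {q : ℚ | p.Coprime q.den}
  zero_mem' := by simp [Set.mem_setOf_eq, Rat.den_zero]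
  one_mem' := by simp [Set.mem_setOf_eq, Rat.den_one]
  add_mem' := by
    intro a b ha hb
    exact Nat.Coprime.coprime_dvd_right (Rat.add_den_dvd a b) (Nat.Coprime.mul_right ha hb)
  mul_mem' := by
    intro a b ha hb
    exact Nat.Coprime.coprime_dvd_right (Rat.mul_den_dvd a b) (Nat.Coprime.mul_right ha hb)
  neg_mem' := by
    intro a ha
    simpa [Set.mem_setOf_eq, Rat.den_neg_eq_den] using ha

/-- The abelian group `ℚ/ℤ_(p)`. -/
abbrev QmodZLoc (p : ℕ) := ℚ ⧸ (ZLoc p).toAddSubgroup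

/-- The `(n+1)`-st homology of a chain complex `(C, d)` with `d n : C (n+1) → C n`:
the quotient of the cycles `ker (d n) ⊆ C (n+1)` by the boundaries `range (d (n+1))`. -/
abbrev homologyAt (C : ℤ → Type) [∀ n, AddCommGroup (C n)]
    (d : ∀ n : ℤ, C (n + 1) →ₗ[ℤ] C n) (n : ℤ) :=
  LinearMap.ker (d n) ⧸
    Submodule.comap (LinearMap.ker (d n)).subtype (LinearMap.range (d (n + 1)))

open LinearMap Submodule

def IsFiniteAddPGroup (p : ℕ) (G : Type*) [AddCommGroup G] : Prop :=
  Finite G ∧ ∀ x : G, ∃ k : ℕ, p ^ k • x = 0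

namespace IsFiniteAddPGroup

variable {p : ℕ} {G H : Type*} [AddCommGroup G] [AddCommGroup H]

theorem of_injective (hH : IsFiniteAddPGroup p H) (f : G →+ H) (hf : Function.Injective f) :
    IsFiniteAddPGroup p G :=
  ⟨have := hH.1; .of_injective f hf,
    fun x => (hH.2 (f x)).imp fun _ hk => hf (by rwa [map_nsmul, map_zero])⟩

theorem of_surjective (hG : IsFiniteAddPGroup p G) (f : G →+ H) (hf : Function.Surjective f) :
    IsFiniteAddPGroup p H := by
  refine ⟨have := hG.1; .of_surjective f hf, fun y => ?_⟩
  obtain ⟨x, rfl⟩ := hf y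
  exact (hG.2 x).imp fun _ hk => by rw [← map_nsmul, hk, map_zero]

theorem quotient_of_ker_eq (hH : IsFiniteAddPGroup p H) (f : G →+ H) {S : AddSubgroup G}
    (hS : f.ker = S) : IsFiniteAddPGroup p (G ⧸ S) :=
  hH.of_injective ((QuotientAddGroup.kerLift f).comp
      (QuotientAddGroup.quotientAddEquivOfEq hS.symm).toAddMonoidHom)
    ((QuotientAddGroup.kerLift_injective f).comp (AddEquiv.injective _))

end IsFiniteAddPGroup

section Comparison

variable {R : Type*} [CommRing R] {D : Type*} [AddCommGroup D] [Module R D]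
  {A B E : Type*} [AddCommGroup A] [Module R A] [AddCommGroup B] [Module R B]
  [AddCommGroup E] [Module R E]

abbrev boundaries (f : A →ₗ[R] B) (g : B →ₗ[R] E) : Submodule R (ker g) :=
  (range f).comap (ker g).subtype

abbrev homologyOf (f : A →ₗ[R] B) (g : B →ₗ[R] E) : Type _ :=
  ker g ⧸ boundaries f g

variable (D) in
def cyclesTensor (g : B →ₗ[R] E) : D ⊗[R] ker g →ₗ[R] ker (lTensor D g) :=
  (lTensor D (ker g).subtype).codRestrict _ fun y => by
    rw [mem_ker, ← comp_apply, ← lTensor_comp, comp_ker_subtype, lTensor_zero, LinearMap.zero_apply]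

variable {f : A →ₗ[R] B} {g : B →ₗ[R] E}
  {φ : D ⊗[R] homologyOf f g →+ homologyOf (lTensor D f) (lTensor D g)}

theorem comparison_apply_lTensor_mkQ
    (hφ : ∀ (q : D) (z : ker g), φ (q ⊗ₜ Submodule.Quotient.mk z) =
      Submodule.Quotient.mk (cyclesTensor D g (q ⊗ₜ z))) (y : D ⊗[R] ker g) :
    φ (lTensor D (boundaries f g).mkQ y) =
      (boundaries (lTensor D f) (lTensor D g)).mkQ (cyclesTensor D g y) := by
  induction y using TensorProduct.induction_on with
  | zero => simp
  | tmul q z => exact hφ q z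
  | add y₁ y₂ h₁ h₂ => simp only [map_add, h₁, h₂]

theorem exists_surjective_ker_comparison (hgf : g ∘ₗ f = 0)
    (hφ : ∀ y, φ (lTensor D (boundaries f g).mkQ y) =
      (boundaries (lTensor D f) (lTensor D g)).mkQ (cyclesTensor D g y)) :
    ∃ ψ : ker (lTensor D (ker g).subtype) →+ φ.ker, Function.Surjective ψ := by
  let π := lTensor D (boundaries f g).mkQ
  let K := (ker (lTensor D (ker g).subtype)).toAddSubgroup
  refine ⟨(π.toAddMonoidHom.comp K.subtype).codRestrict φ.ker fun y => ?_, ?_⟩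
  · have : cyclesTensor D g y = 0 := Subtype.ext y.2
    rw [AddMonoidHom.mem_ker, AddMonoidHom.comp_apply, LinearMap.toAddMonoidHom_coe, hφ,
      AddSubgroup.coe_subtype, this, map_zero]
  rintro ⟨x, hx⟩
  obtain ⟨y, rfl⟩ := lTensor_surjective D (mkQ_surjective _) x
  rw [AddMonoidHom.mem_ker, hφ, mkQ_apply, Quotient.mk_eq_zero, mem_comap] at hx
  obtain ⟨v, hv⟩ := hx
  -- `y` maps to the boundary `(1 ⊗ f) v`; correct it by a lift of `v` to `D ⊗ ker g`.
  let e : A →ₗ[R] ker g :=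
    f.codRestrict (ker g) fun a => by rw [mem_ker, ← comp_apply, hgf, LinearMap.zero_apply]
  have he : (boundaries f g).mkQ ∘ₗ e = 0 := by
    ext a
    exact (Quotient.mk_eq_zero _).mpr ⟨a, rfl⟩
  refine ⟨⟨y - lTensor D e v, ?_⟩, Subtype.ext ?_⟩
  · change lTensor D (ker g).subtype (y - lTensor D e v) = 0
    rw [map_sub, ← comp_apply, ← lTensor_comp, subtype_comp_codRestrict, hv]
    exact sub_self _
  · change π (y - lTensor D e v) = π y
    rw [map_sub, ← comp_apply π, ← lTensor_comp, he, lTensor_zero, LinearMap.zero_apply, sub_zero]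

/-- `κ` is induced by `1 ⊗ g : D ⊗ B → D ⊗ im g`. -/
theorem exists_ker_eq_range_comparison (hgf : g ∘ₗ f = 0)
    (hφ : ∀ y, φ (lTensor D (boundaries f g).mkQ y) =
      (boundaries (lTensor D f) (lTensor D g)).mkQ (cyclesTensor D g y)) :
    ∃ κ : homologyOf (lTensor D f) (lTensor D g) →+ ker (lTensor D (range g).subtype),
      κ.ker = φ.range := by
  have hg : (range g).subtype ∘ₗ g.rangeRestrict = g := subtype_comp_codRestrict _ _ _
  let κ₀ : ker (lTensor D g) →ₗ[R] ker (lTensor D (range g).subtype) :=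
    (lTensor D g.rangeRestrict ∘ₗ (ker (lTensor D g)).subtype).codRestrict _ fun z => by
      change lTensor D (range g).subtype (lTensor D g.rangeRestrict z.1) = 0
      rw [← comp_apply, ← lTensor_comp, hg]
      exact z.2
  have hκ₀ : boundaries (lTensor D f) (lTensor D g) ≤ ker κ₀ := by
    rintro z ⟨v, hv⟩
    have hf : g.rangeRestrict ∘ₗ f = 0 := by
      ext a
      exact congrArg (· a) hgf
    refine Subtype.ext ?_
    change lTensor D g.rangeRestrict z.1 = 0
    rw [show z.1 = lTensor D f v from hv.symm, ← comp_apply, ← lTensor_comp, hf, lTensor_zero,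
      LinearMap.zero_apply]
  refine ⟨((boundaries _ _).liftQ κ₀ hκ₀).toAddMonoidHom, ?_⟩
  have hexact : Function.Exact (ker g).subtype g.rangeRestrict := by
    rw [LinearMap.exact_iff, ker_rangeRestrict, range_subtype]
  ext x
  constructor
  · intro hx
    obtain ⟨z, rfl⟩ := Submodule.Quotient.mk_surjective _ x
    rw [AddMonoidHom.mem_ker, LinearMap.toAddMonoidHom_coe, liftQ_apply] at hx
    obtain ⟨y, hy⟩ := (lTensor_exact D hexact g.surjective_rangeRestrict z.1).mp
      (congrArg Subtype.val hx)
    refine ⟨lTensor D (boundaries f g).mkQ y, ?_⟩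
    rw [hφ, mkQ_apply]
    exact congrArg _ (Subtype.ext hy)
  · rintro ⟨x, rfl⟩
    obtain ⟨y, rfl⟩ := lTensor_surjective D (mkQ_surjective _) x
    rw [AddMonoidHom.mem_ker, LinearMap.toAddMonoidHom_coe, hφ, mkQ_apply, liftQ_apply]
    refine Subtype.ext ?_
    change lTensor D g.rangeRestrict (lTensor D (ker g).subtype y) = 0
    rw [← comp_apply, ← lTensor_comp, hexact.linearMap_comp_eq_zero, lTensor_zero,
      LinearMap.zero_apply]

end Comparison

namespace TensorProduct

theorem exists_pow_nsmul_eq_zero {R D M : Type*} [CommSemiring R] [AddCommMonoid D] [Module R D]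
    [AddCommMonoid M] [Module R M] {p : ℕ} (hD : ∀ x : D, ∃ k : ℕ, p ^ k • x = 0)
    (y : D ⊗[R] M) : ∃ k : ℕ, p ^ k • y = 0 := by
  induction y using TensorProduct.induction_on with
  | zero => exact ⟨0, smul_zero _⟩
  | tmul q m => exact (hD q).imp fun k hk => by rw [smul_tmul', hk, zero_tmul]
  | add y₁ y₂ h₁ h₂ =>
    obtain ⟨k, hk⟩ := h₁
    obtain ⟨l, hl⟩ := h₂
    refine ⟨k + l, ?_⟩
    rw [smul_add, pow_add, mul_smul, mul_smul, smul_comm _ _ y₁, hk, hl, smul_zero, smul_zero,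
      add_zero]

theorem subsingleton_of_isTorsionBy {R D T : Type*} [CommSemiring R] [AddCommMonoid D] [Module R D]
    [AddCommMonoid T] [Module R T] {c : R} (hD : Function.Surjective fun x : D => c • x)
    (hT : Module.IsTorsionBy R T c) : Subsingleton (D ⊗[R] T) := by
  refine subsingleton_of_forall_eq 0 fun y => ?_
  induction y using TensorProduct.induction_on with
  | zero => rfl
  | tmul q t =>
    obtain ⟨q, rfl⟩ := hD q
    rw [smul_tmul, hT, tmul_zero]
  | add y₁ y₂ h₁ h₂ => rw [h₁, h₂, add_zero]

end TensorProduct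

theorem Module.exists_isTorsionBy_torsion (M : Type*) [AddCommGroup M] [Module.Finite ℤ M] :
    ∃ c : ℤ, c ≠ 0 ∧ Module.IsTorsionBy ℤ (torsion ℤ M) c := by
  obtain ⟨c, hann, hc⟩ :=
    annihilator_top_inter_nonZeroDivisors (torsion_isTorsion (R := ℤ) (M := M))
  exact ⟨c, nonZeroDivisors.ne_zero hc, fun x => Submodule.mem_annihilator.mp hann x mem_top⟩

theorem finite_torsionBy_tensorProduct {D M : Type*} [AddCommGroup D] [AddCommGroup M]
    [Module.Finite ℤ M] (hD : ∀ c : ℤ, c ≠ 0 → Function.Surjective fun x : D => c • x) (c : ℤ)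
    [Finite (torsionBy ℤ D c)] : Finite (torsionBy ℤ (D ⊗[ℤ] M) c) := by
  let T := torsion ℤ M
  obtain ⟨c₀, hc₀, hT⟩ := Module.exists_isTorsionBy_torsion M
  have := TensorProduct.subsingleton_of_isTorsionBy (hD c₀ hc₀) hT
  have hinj : Function.Injective (lTensor D T.mkQ) :=
    (injective_iff_eq_zero_of_exact
      (lTensor_exact D (exact_subtype_mkQ T) T.mkQ_surjective)).mpr
      (Subsingleton.elim _ _)
  let b := Module.Free.chooseBasis ℤ (M ⧸ T)
  let e := (TensorProduct.congr (LinearEquiv.refl ℤ D) b.repr).trans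
      (TensorProduct.finsuppScalarRight ℤ ℤ D (Module.Free.ChooseBasisIndex ℤ (M ⧸ T)))
  let coord (x : torsionBy ℤ (D ⊗[ℤ] M) c) (i : Module.Free.ChooseBasisIndex ℤ (M ⧸ T)) :
      torsionBy ℤ D c :=
    ⟨e (lTensor D T.mkQ x) i, by
      rw [mem_torsionBy_iff, ← Finsupp.smul_apply, ← map_smul, ← map_smul,
        (mem_torsionBy_iff _ _).mp x.2, map_zero, map_zero, Finsupp.zero_apply]⟩
  refine .of_injective coord fun x y hxy => Subtype.ext <| hinj <| e.injective ?_
  exact Finsupp.ext fun i => congrArg Subtype.val (congrFun hxy i)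

theorem LinearMap.lTensor_ker_subtype_injective {R : Type*} [CommRing R] (D : Type*)
    [AddCommGroup D] [Module R D] {N F : Type*} [AddCommGroup N] [Module R N] [AddCommGroup F]
    [Module R F] [Module.Projective R F] (g : N →ₗ[R] F) (hg : Function.Surjective g) :
    Function.Injective (lTensor D (ker g).subtype) := by
  obtain ⟨s, hs⟩ := Module.projective_lifting_property g LinearMap.id hg
  let r : N →ₗ[R] ker g := (LinearMap.id - s ∘ₗ g).codRestrict (ker g) fun x => by
    simp [← comp_apply g s, hs]
  have hr : r ∘ₗ (ker g).subtype = LinearMap.id := by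
    ext x
    simp [r, mem_ker.mp x.2]
  refine Function.LeftInverse.injective (g := lTensor D r) fun x => ?_
  rw [← comp_apply, ← lTensor_comp, hr, lTensor_id, id_apply]

theorem exists_ne_zero_ker_lTensor_subtype_le_torsionBy (D : Type*) [AddCommGroup D]
    {N : Type*} [AddCommGroup N] [Module.Finite ℤ N] (M : Submodule ℤ N) :
    ∃ c : ℤ, c ≠ 0 ∧ ker (lTensor D M.subtype) ≤ torsionBy ℤ (D ⊗[ℤ] M) c := by
  obtain ⟨c, hc, hT⟩ := Module.exists_isTorsionBy_torsion (N ⧸ M)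
  -- `ker g` is the saturation of `M`: a direct summand of `N` with `c • ker g ⊆ M`.
  let g := (torsion ℤ (N ⧸ M)).mkQ ∘ₗ M.mkQ
  have hMg : M ≤ ker g := fun y hy => by simp [g, (Quotient.mk_eq_zero M).mpr hy]
  have hcg (y : ker g) : c • (y : N) ∈ M := by
    have hy : M.mkQ y ∈ torsion ℤ (N ⧸ M) := (Quotient.mk_eq_zero _).mp y.2
    exact (Quotient.mk_eq_zero M).mp (congrArg Subtype.val (hT (x := ⟨_, hy⟩)))
  let μ : ker g →ₗ[ℤ] M := (c • (ker g).subtype).codRestrict M hcg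
  have hμ : μ ∘ₗ inclusion hMg = c • LinearMap.id := rfl
  refine ⟨c, hc, fun x hx => ?_⟩
  have hx' : lTensor D (inclusion hMg) x = 0 := by
    apply lTensor_ker_subtype_injective D g ((mkQ_surjective _).comp (mkQ_surjective _))
    rw [← comp_apply, ← lTensor_comp, subtype_comp_inclusion, mem_ker.mp hx, map_zero]
  have := congrArg (lTensor D μ) hx'
  rwa [← comp_apply, ← lTensor_comp, hμ, lTensor_smul, lTensor_id, map_zero] at this

theorem AddCommGroup.torsionBy_le_torsionBy_pow_factorization {p : ℕ} (hp : p.Prime)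
    {G : Type*} [AddCommGroup G] (hG : ∀ x : G, ∃ k : ℕ, p ^ k • x = 0) {c : ℤ} (hc : c ≠ 0) :
    torsionBy ℤ G c ≤ torsionBy ℤ G ((p : ℤ) ^ c.natAbs.factorization p) := by
  intro x hx
  rw [mem_torsionBy_iff] at hx ⊢
  obtain ⟨k, hk⟩ := hG x
  obtain ⟨j, -, hj⟩ := (Nat.dvd_prime_pow hp).mp (addOrderOf_dvd_of_nsmul_eq_zero hk)
  have hjc : p ^ j ∣ c.natAbs := by
    rw [← hj, ← Int.natCast_dvd]; exact addOrderOf_dvd_iff_zsmul_eq_zero.mpr hx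
  rw [← addOrderOf_dvd_iff_zsmul_eq_zero, hj]
  exact_mod_cast pow_dvd_pow p
    ((hp.pow_dvd_iff_le_factorization (Int.natAbs_ne_zero.mpr hc)).mp hjc)

namespace ZLoc

variable {p : ℕ}

theorem intCast_mul_inv_mem {u : ℕ} (hu : p.Coprime u) (m : ℤ) : (m : ℚ) * (u : ℚ)⁻¹ ∈ ZLoc p := by
  refine mul_mem (intCast_mem _ m) ?_
  change p.Coprime _
  rw [Rat.inv_natCast_den]
  split_ifs
  exacts [Nat.coprime_one_right p, hu]

theorem exists_eq_intCast_add_pow_mul {s : ℚ} (hs : s ∈ ZLoc p) (a : ℕ) :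
    ∃ k : ℤ, ∃ t ∈ ZLoc p, s = k + p ^ a * t := by
  obtain ⟨α, β, hαβ⟩ : IsCoprime (s.den : ℤ) ((p ^ a : ℕ) : ℤ) :=
    Nat.isCoprime_iff_coprime.mpr (Nat.Coprime.pow_left a hs).symm
  refine ⟨s.num * α, s.num * β * (s.den : ℚ)⁻¹,
    by simpa using intCast_mul_inv_mem hs (s.num * β), ?_⟩
  have hden : (s.den : ℚ) ≠ 0 := by exact_mod_cast s.den_nz
  have hαβ' : (α : ℚ) * s.den + β * p ^ a = 1 := by exact_mod_cast hαβ
  conv_lhs => rw [← Rat.num_div_den s]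
  field_simp
  push_cast
  linear_combination -(s.num : ℚ) * hαβ'

end ZLoc

namespace QmodZLoc

variable {p : ℕ}

theorem mk_eq_zero_iff {q : ℚ} : (q : QmodZLoc p) = 0 ↔ q ∈ ZLoc p :=
  QuotientAddGroup.eq_zero_iff q

theorem exists_pow_nsmul_eq_zero (hp : p.Prime) (x : QmodZLoc p) : ∃ k : ℕ, p ^ k • x = 0 := by
  obtain ⟨q, rfl⟩ := QuotientAddGroup.mk_surjective x
  obtain ⟨v, u, hpu, hden⟩ : ∃ v u, p.Coprime u ∧ p ^ v * u = q.den :=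
    ⟨_, _, Nat.coprime_ordCompl hp q.den_nz, Nat.ordProj_mul_ordCompl_eq_self q.den p⟩
  have hu : (u : ℚ) ≠ 0 := by exact_mod_cast right_ne_zero_of_mul (hden ▸ q.den_nz)
  have hp0 : (p : ℚ) ≠ 0 := by exact_mod_cast hp.ne_zero
  refine ⟨v, ?_⟩
  rw [← QuotientAddGroup.mk_nsmul, mk_eq_zero_iff, nsmul_eq_mul]
  convert ZLoc.intCast_mul_inv_mem hpu q.num using 1
  conv_lhs => rw [← Rat.num_div_den q, ← hden]
  push_cast
  field_simp

theorem zsmul_surjective {c : ℤ} (hc : c ≠ 0) :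
    Function.Surjective fun x : QmodZLoc p => c • x := by
  intro x
  obtain ⟨q, rfl⟩ := QuotientAddGroup.mk_surjective x
  refine ⟨((q / c : ℚ) : QmodZLoc p), ?_⟩
  simp only [← QuotientAddGroup.mk_zsmul, zsmul_eq_mul]
  congr 1
  field_simp

theorem finite_torsionBy_pow (hp : p.Prime) (a : ℕ) :
    Finite (torsionBy ℤ (QmodZLoc p) ((p : ℤ) ^ a)) := by
  have : NeZero (p ^ a) := ⟨pow_ne_zero a hp.ne_zero⟩
  refine Set.Finite.to_subtype <| (Set.finite_range
    fun i : ZMod (p ^ a) => ((i.val / p ^ a : ℚ) : QmodZLoc p)).subset ?_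
  intro x hx
  obtain ⟨q, rfl⟩ := QuotientAddGroup.mk_surjective x
  rw [SetLike.mem_coe, mem_torsionBy_iff, ← QuotientAddGroup.mk_zsmul, mk_eq_zero_iff] at hx
  obtain ⟨k, t, ht, hkt⟩ := ZLoc.exists_eq_intCast_add_pow_mul hx a
  refine ⟨k, QuotientAddGroup.eq.mpr ?_⟩
  have hval : ((k : ZMod (p ^ a)).val : ℚ) = k - p ^ a * (k / (p ^ a : ℕ) : ℤ) := by
    have := ZMod.val_intCast (n := p ^ a) k
    rw [Int.emod_def] at this
    exact_mod_cast this
  have hpa : (p : ℚ) ^ a ≠ 0 := pow_ne_zero a (by exact_mod_cast hp.ne_zero)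
  have hdiff : -((k : ZMod (p ^ a)).val / p ^ a : ℚ) + q = (k / (p ^ a : ℕ) : ℤ) + t := by
    rw [zsmul_eq_mul] at hkt
    push_cast at hkt
    rw [hval]
    field_simp
    linear_combination hkt
  rw [hdiff]
  exact add_mem (intCast_mem (ZLoc p) _) ht

theorem finite_torsionBy (hp : p.Prime) {c : ℤ} (hc : c ≠ 0) :
    Finite (torsionBy ℤ (QmodZLoc p) c) :=
  have := finite_torsionBy_pow hp (c.natAbs.factorization p)
  .of_injective _ (inclusion_injective
    (AddCommGroup.torsionBy_le_torsionBy_pow_factorization hp (exists_pow_nsmul_eq_zero hp) hc))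

theorem isFiniteAddPGroup_ker_lTensor_subtype (hp : p.Prime) {N : Type*}
    [AddCommGroup N] [Module.Finite ℤ N] (M : Submodule ℤ N) :
    IsFiniteAddPGroup p (ker (lTensor (QmodZLoc p) M.subtype)) := by
  obtain ⟨c, hc, hK⟩ := exists_ne_zero_ker_lTensor_subtype_le_torsionBy (QmodZLoc p) M
  have := finite_torsionBy hp hc
  have : Finite (torsionBy ℤ (QmodZLoc p ⊗[ℤ] M) c) :=
    finite_torsionBy_tensorProduct (fun _ hc => zsmul_surjective hc) c
  refine ⟨.of_injective _ (inclusion_injective hK), fun x => ?_⟩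
  obtain ⟨k, hk⟩ := TensorProduct.exists_pow_nsmul_eq_zero (exists_pow_nsmul_eq_zero hp) x.1
  exact ⟨k, Subtype.ext hk⟩

end QmodZLoc

/-- Let `C` be a chain complex of finitely generated abelian groups.  Then for every `n`, the
natural homomorphism `(ℚ/ℤ_(p)) ⊗ Hₙ(C) → Hₙ((ℚ/ℤ_(p)) ⊗ C)` (characterized by
`q ⊗ [z] ↦ [q ⊗ z]`) has kernel and cokernel that are finite `p`-groups. -/
theorem tensor_homology_comparison_finite_pGroup
    (p : ℕ) (hp : p.Prime)
    (C : ℤ → Type) [∀ n, AddCommGroup (C n)] (hfg : ∀ n, AddGroup.FG (C n))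
    (d : ∀ n : ℤ, C (n + 1) →ₗ[ℤ] C n)
    (hdd : ∀ n : ℤ, (d n).comp (d (n + 1)) = 0)
    (n : ℤ)
    (φ : (QmodZLoc p ⊗[ℤ] homologyAt C d n) →+
      homologyAt (fun m => QmodZLoc p ⊗[ℤ] C m) (fun m => LinearMap.lTensor _ (d m)) n)
    (hφ : ∀ (q : QmodZLoc p) (z : C (n + 1)) (hz : z ∈ LinearMap.ker (d n)),
      φ (q ⊗ₜ[ℤ] Submodule.Quotient.mk ⟨z, hz⟩) =
        Submodule.Quotient.mk
          ⟨q ⊗ₜ[ℤ] z, by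
            change LinearMap.lTensor _ (d n) (q ⊗ₜ[ℤ] z) = 0
            simp only [LinearMap.lTensor_tmul, LinearMap.mem_ker.mp hz, tmul_zero]⟩) :
    (Finite φ.ker ∧ ∀ x : φ.ker, ∃ k : ℕ, p ^ k • x = 0) ∧
      (Finite (_ ⧸ φ.range) ∧ ∀ x : (_ ⧸ φ.range), ∃ k : ℕ, p ^ k • x = 0) := by
  have (m : ℤ) : Module.Finite ℤ (C m) := Module.Finite.iff_addGroup_fg.mpr (hfg m)
  have hsq := comparison_apply_lTensor_mkQ (f := d (n + 1)) (g := d n) fun q z => hφ q z z.2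
  obtain ⟨ψ, hψ⟩ := exists_surjective_ker_comparison (hdd n) hsq
  obtain ⟨κ, hκ⟩ := exists_ker_eq_range_comparison (hdd n) hsq
  exact ⟨(QmodZLoc.isFiniteAddPGroup_ker_lTensor_subtype hp _).of_surjective ψ hψ,
    (QmodZLoc.isFiniteAddPGroup_ker_lTensor_subtype hp _).quotient_of_ker_eq κ hκ⟩
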